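/- Let G be the graph on ℤ^n with edges between points at ℓ^∞-distance 1, and let m ≥ 1. There is no function f : ℤ^n → {1,…,n} and constant K such that every 1-connected component of each fiber f^{-1}({i}) has at most K elements. (I.e., χ_{⋆,m}(G) > n.) -/

import Mathlib

/-!
By the `n`-dimensional Hex theorem, for every `L` some colour class has a 1-connected component
meeting both hyperplanes `xᵢ = 0` and `xᵢ = L` for some `i`; moving along it, the coordinate `xᵢ`
changes by at most one per step, so the component has at least `L + 1` points.

For the Hex theorem, suppose no component crosses the cube `[0, L]ⁿ`. Label a point `0` if its
component meets every hyperplane `xᵢ = 0`, and otherwise `i + 1` for some `i` whose hyperplane it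
misses. No point of `xᵢ = 0` gets label `i + 1` and no point of `xᵢ = L` gets label `0`, so by
Sperner's lemma some simplex of the Freudenthal triangulation of the cube carries all `n + 1`
labels. But two of its vertices share a colour, and being `ℓ∞`-neighbours they lie in the same
component and therefore get the same label.

Sperner's lemma is proved by induction on the faces `[0, L]ᴰ × {0}ⁿ⁻ᴰ`. Call a facet of a
simplex of the face of dimension `D + 1` a door if it carries the labels `0, …, D`. A fully
labelled simplex has exactly one door and any other simplex zero or two; interior doors are shared
by two simplices, and the doors on the boundary are exactly the fully labelled simplices of the
face of dimension `D`. Hence the number of fully labelled simplices stays odd.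
-/

/-- A subset of `ℤⁿ` is 1-connected: any two points are joined by a finite sequence in the
set whose consecutive terms are at `ℓ∞`-distance at most `1`. -/
def OneConnected {n : ℕ} (P : Set (Fin n → ℤ)) : Prop :=
  ∀ p ∈ P, ∀ q ∈ P, ∃ (N : ℕ) (c : Fin (N + 1) → (Fin n → ℤ)),
    (∀ t, c t ∈ P) ∧ c 0 = p ∧ c (Fin.last N) = q ∧
    ∀ (t : Fin N) (j : Fin n), |c t.castSucc j - c t.succ j| ≤ 1

/-- `C` is a 1-connected component of `S ⊆ ℤⁿ`: a maximal 1-connected subset of `S`. -/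
def IsOneComponent {n : ℕ} (S C : Set (Fin n → ℤ)) : Prop :=
  C ⊆ S ∧ OneConnected C ∧ ∀ C', C ⊆ C' → C' ⊆ S → OneConnected C' → C' = C

open Finset Equiv Relation

section DoorParity

variable {ι β : Type*} [DecidableEq ι] [DecidableEq β] {s : Finset ι} {T : Finset β} {g : ι → β}

theorem image_erase_eq_image_of_apply_eq {k k' : ι} (hk' : k' ∈ s) (hne : k' ≠ k)
    (h : g k' = g k) : (s.erase k).image g = s.image g := by
  refine (image_subset_image (erase_subset k s)).antisymm fun y hy => ?_
  obtain ⟨j, hj, rfl⟩ := mem_image.mp hy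
  by_cases hjk : j = k
  · exact mem_image.mpr ⟨k', mem_erase.mpr ⟨hne, hk'⟩, hjk ▸ h⟩
  · exact mem_image_of_mem g (mem_erase.mpr ⟨hjk, hj⟩)

theorem injOn_erase_of_image_erase_eq {w : β} {k : ι} (hw : w ∈ T) (hcard : #s = #T)
    (hk : k ∈ s) (h : (s.erase k).image g = T.erase w) : Set.InjOn g (s.erase k) :=
  injOn_of_card_image_eq <| by rw [h, card_erase_of_mem hw, card_erase_of_mem hk, hcard]

theorem filter_image_erase_eq_singleton {w : β} {k₀ : ι} (hcard : #s = #T)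
    (hfull : s.image g = T) (hk₀ : k₀ ∈ s) (hgk₀ : g k₀ = w) :
    s.filter (fun k => (s.erase k).image g = T.erase w) = {k₀} := by
  have hinj : Set.InjOn g s := injOn_of_card_image_eq (by rw [hfull, hcard])
  ext k
  simp only [mem_filter, mem_singleton]
  constructor
  · rintro ⟨hk, himage⟩
    by_contra hne
    have : w ∈ T.erase w := himage ▸ hgk₀ ▸ mem_image_of_mem g (mem_erase.mpr ⟨Ne.symm hne, hk₀⟩)
    exact notMem_erase w T this
  · rintro rfl
    refine ⟨hk₀, ?_⟩
    rw [← hfull, ← hgk₀]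
    ext y
    simp only [mem_image, mem_erase]
    constructor
    · rintro ⟨j, ⟨hjk, hj⟩, rfl⟩
      exact ⟨fun h => hjk (hinj hj hk₀ h), j, hj, rfl⟩
    · rintro ⟨hy, j, hj, rfl⟩
      exact ⟨j, ⟨fun h => hy (h ▸ rfl), hj⟩, rfl⟩

theorem card_filter_image_erase_eq_zero_or_two {w : β} (hw : w ∈ T) (hcard : #s = #T)
    (hg : ∀ k ∈ s, g k ∈ T) (hfull : s.image g ≠ T) :
    #(s.filter fun k => (s.erase k).image g = T.erase w) = 0 ∨
      #(s.filter fun k => (s.erase k).image g = T.erase w) = 2 := by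
  set D := s.filter fun k => (s.erase k).image g = T.erase w
  obtain hD | ⟨k₀, hk₀⟩ := D.eq_empty_or_nonempty
  · exact Or.inl (card_eq_zero.mpr hD)
  right
  obtain ⟨hk₀s, hk₀D⟩ := mem_filter.mp hk₀
  have hgk₀ : g k₀ ≠ w := fun h => hfull <| by
    rw [← insert_erase hk₀s, image_insert, hk₀D, h, insert_erase hw]
  obtain ⟨b, hb, hgb⟩ : ∃ b ∈ s.erase k₀, g b = g k₀ :=
    mem_image.mp (hk₀D ▸ mem_erase.mpr ⟨hgk₀, hg k₀ hk₀s⟩)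
  obtain ⟨hbk₀, hbs⟩ := mem_erase.mp hb
  suffices D = {k₀, b} by rw [this, card_pair (Ne.symm hbk₀)]
  ext k
  simp only [D, mem_filter, mem_insert, mem_singleton]
  constructor
  · rintro ⟨hk, hkD⟩
    by_contra! hne
    exact hbk₀ (injOn_erase_of_image_erase_eq hw hcard hk hkD (mem_erase.mpr ⟨hne.2.symm, hbs⟩)
      (mem_erase.mpr ⟨hne.1.symm, hk₀s⟩) hgb)
  · rintro (rfl | rfl)
    · exact ⟨hk₀s, hk₀D⟩
    · refine ⟨hbs, ?_⟩
      rw [image_erase_eq_image_of_apply_eq hk₀s (Ne.symm hbk₀) hgb.symm, ← hk₀D,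
        image_erase_eq_image_of_apply_eq hbs hbk₀ hgb]

/-- Read `s` as the vertices of a simplex labelled by `g`: the facets carrying exactly the labels
`T.erase w` number one if the simplex carries all of `T`, and an even number otherwise. -/
theorem card_filter_image_erase_eq_mod_two {w : β} (hw : w ∈ T) (hcard : #s = #T)
    (hg : ∀ k ∈ s, g k ∈ T) :
    (#(s.filter fun k => (s.erase k).image g = T.erase w) : ZMod 2) =
      if s.image g = T then 1 else 0 := by
  split_ifs with hfull
  · obtain ⟨k₀, hk₀, hgk₀⟩ := mem_image.mp (hfull ▸ hw)
    rw [filter_image_erase_eq_singleton hcard hfull hk₀ hgk₀, card_singleton, Nat.cast_one]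
  · rcases card_filter_image_erase_eq_zero_or_two hw hcard hg hfull with h | h <;>
      rw [h] <;> decide

end DoorParity

namespace Sperner

variable {n : ℕ}

def cube (L : ℕ) : Set (Fin n → ℤ) := {p | ∀ j, 0 ≤ p j ∧ p j ≤ L}

/-- The `k`-th vertex of the Freudenthal simplex with base point `x` whose edges, in order,
go in the directions `σ 0, σ 1, …`; vertices `k ≥ n` all equal the top vertex. -/
def vertex (x : Fin n → ℤ) (σ : Perm (Fin n)) (k : ℕ) : Fin n → ℤ :=
  fun j => x j + if (σ.symm j : ℕ) < k then 1 else 0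

theorem abs_vertex_sub_vertex_le_one (x : Fin n → ℤ) (σ : Perm (Fin n)) (k k' : ℕ) (j : Fin n) :
    |vertex x σ k j - vertex x σ k' j| ≤ 1 := by
  unfold vertex
  split_ifs <;> simp

/-- The Freudenthal simplices triangulating the face `[0, L]ᴰ × {0}ⁿ⁻ᴰ` of the cube. -/
noncomputable def faceSimplices (L D : ℕ) : Finset ((Fin n → ℤ) × Perm (Fin n)) :=
  (Fintype.piFinset (fun _ => Ico (0 : ℤ) L) ×ˢ univ).filter
    fun t => ∀ j : Fin n, D ≤ j → t.1 j = 0 ∧ t.2 j = j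

theorem mem_faceSimplices {L D : ℕ} {x : Fin n → ℤ} {σ : Perm (Fin n)} :
    (x, σ) ∈ faceSimplices L D ↔
      (∀ j, 0 ≤ x j ∧ x j < L) ∧ ∀ j : Fin n, D ≤ j → x j = 0 ∧ σ j = j := by
  simp [faceSimplices, Fintype.mem_piFinset]

variable {L D : ℕ} {x : Fin n → ℤ} {σ : Perm (Fin n)}

theorem faceSimplices_zero (hL : 1 ≤ L) : faceSimplices (n := n) L 0 = {(0, 1)} := by
  ext ⟨x, σ⟩
  simp only [mem_faceSimplices, zero_le, true_implies, mem_singleton, Prod.mk.injEq]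
  constructor
  · intro h
    exact ⟨funext fun j => (h.2 j).1, Equiv.ext fun j => (h.2 j).2⟩
  · rintro ⟨rfl, rfl⟩
    exact ⟨fun _ => ⟨le_rfl, by simp; omega⟩, fun _ => ⟨rfl, rfl⟩⟩

theorem faceSimplices_mono {D D' : ℕ} (h : D ≤ D') :
    faceSimplices (n := n) L D ⊆ faceSimplices L D' :=
  fun ⟨_, _⟩ ht => mem_faceSimplices.mpr
    ⟨(mem_faceSimplices.mp ht).1, fun j hj => (mem_faceSimplices.mp ht).2 j (h.trans hj)⟩

theorem apply_lt_of_mem_faceSimplices (h : (x, σ) ∈ faceSimplices L D) {u : Fin n}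
    (hu : (u : ℕ) < D) : (σ u : ℕ) < D := by
  by_contra! hσu
  have := σ.injective ((mem_faceSimplices.mp h).2 (σ u) hσu).2
  omega

theorem vertex_mem_cube (h : (x, σ) ∈ faceSimplices L D) (k : ℕ) : vertex x σ k ∈ cube L := by
  intro j
  have := (mem_faceSimplices.mp h).1 j
  unfold vertex
  split_ifs <;> omega

theorem vertex_apply_eq_zero (h : (x, σ) ∈ faceSimplices L D) {k : ℕ} (hk : k ≤ D) {j : Fin n}
    (hj : D ≤ j) : vertex x σ k j = 0 := by
  obtain ⟨hxj, hσj⟩ := (mem_faceSimplices.mp h).2 j hj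
  have : σ.symm j = j := σ.symm_apply_eq.mpr hσj.symm
  simp only [vertex, hxj, this]
  split_ifs <;> omega

theorem coe_cycleRange_apply (i j : Fin n) :
    (i.cycleRange j : ℕ) =
      if (j : ℕ) < i then (j : ℕ) + 1 else if (j : ℕ) = i then 0 else (j : ℕ) := by
  rcases lt_trichotomy j i with h | rfl | h
  · rw [Fin.coe_cycleRange_of_lt h, if_pos (show (j : ℕ) < i from h)]
  · simp [Fin.coe_cycleRange_of_le le_rfl]
  · rw [Fin.cycleRange_of_gt h, if_neg (by omega), if_neg (by omega)]

theorem vertex_shift [NeZero n] {i : Fin n} {m : ℕ} (hm : m ≤ i) :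
    vertex (x + Pi.single (σ 0) 1) (σ * i.cycleRange) m = vertex x σ (m + 1) := by
  ext j
  obtain ⟨v, hv⟩ : ∃ v, σ.symm j = i.cycleRange v := ⟨(i.cycleRange).symm (σ.symm j), by simp⟩
  have hsymm : (σ * i.cycleRange).symm j = v := by
    rw [Perm.mul_def, symm_trans_apply, hv, symm_apply_apply]
  have hj : j = σ 0 ↔ (i.cycleRange v : ℕ) = 0 := by
    rw [← σ.symm_apply_eq, hv, Fin.ext_iff, Fin.val_zero]
  have := v.isLt
  simp only [vertex, Pi.add_apply, Pi.single_apply, hsymm, hv, hj, coe_cycleRange_apply]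
  split_ifs <;> first | contradiction | omega

def swapAt (k : ℕ) : Perm (Fin n) :=
  if h : 0 < k ∧ k < n then swap ⟨k - 1, by omega⟩ ⟨k, h.2⟩ else 1

theorem swapAt_mul_self (k : ℕ) : swapAt (n := n) k * swapAt k = 1 := by
  unfold swapAt
  split_ifs <;> simp

theorem swapAt_apply_of_lt {k : ℕ} {j : Fin n} (h : k < j) : swapAt k j = j := by
  unfold swapAt
  split_ifs
  · exact swap_apply_of_ne_of_ne (Fin.ne_of_val_ne (by simp; omega))
      (Fin.ne_of_val_ne (by simp; omega))
  · rfl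

theorem swapAt_ne_one {k : ℕ} (h0 : 0 < k) (hk : k < n) : swapAt (n := n) k ≠ 1 := by
  rw [swapAt, dif_pos ⟨h0, hk⟩, Ne, swap_eq_one_iff, Fin.mk.injEq]
  omega

theorem vertex_mul_swapAt {k m : ℕ} (hm : m ≠ k) : vertex x (σ * swapAt k) m = vertex x σ m := by
  ext j
  unfold swapAt
  split_ifs with h
  · set a : Fin n := ⟨k - 1, by omega⟩
    set b : Fin n := ⟨k, h.2⟩
    have hsymm : (σ * swap a b).symm j = swap a b (σ.symm j) := by
      rw [Perm.mul_def, symm_trans_apply, symm_swap]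
    simp only [vertex, hsymm]
    rw [swap_apply_def]
    split_ifs <;> simp only [a, b, Fin.ext_iff] at * <;> omega
  · rw [mul_one]

structure IsSpernerLabeling (L : ℕ) (lab : (Fin n → ℤ) → Fin (n + 1)) : Prop where
  ne_succ_of_eq_zero : ∀ p ∈ cube L, ∀ i : Fin n, p i = 0 → lab p ≠ i.succ
  ne_zero_of_eq_top : ∀ p ∈ cube L, ∀ i : Fin n, p i = L → lab p ≠ 0

variable (lab : (Fin n → ℤ) → Fin (n + 1))

def labels (t : (Fin n → ℤ) × Perm (Fin n)) (k : ℕ) : ℕ := lab (vertex t.1 t.2 k)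

def IsFull (D : ℕ) (t : (Fin n → ℤ) × Perm (Fin n)) : Prop :=
  (range (D + 1)).image (labels lab t) = range (D + 1)

instance (D : ℕ) : DecidablePred (IsFull lab D) := fun _ => inferInstanceAs (Decidable (_ = _))

variable {lab}

theorem labels_lt (hlab : IsSpernerLabeling L lab) {t : (Fin n → ℤ) × Perm (Fin n)}
    (ht : t ∈ faceSimplices L D) {k : ℕ} (hk : k ≤ D) : labels lab t k < D + 1 := by
  by_contra! hlt
  set l := lab (vertex t.1 t.2 k)
  have hDl : D < l := hlt
  have hl : (l : ℕ) - 1 < n := by have := l.isLt; omega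
  refine hlab.ne_succ_of_eq_zero _ (vertex_mem_cube ht k) ⟨l - 1, hl⟩
    (vertex_apply_eq_zero ht hk (by dsimp only; omega)) (Fin.ext ?_)
  simp only [Fin.val_succ]
  omega

theorem isFull_zero (hlab : IsSpernerLabeling L lab) {t : (Fin n → ℤ) × Perm (Fin n)}
    (ht : t ∈ faceSimplices L 0) : IsFull lab 0 t := by
  have := labels_lt hlab ht le_rfl
  rw [IsFull, range_one, image_singleton]
  congr
  omega

theorem range_erase_add_one (m : ℕ) : (range (m + 1)).erase m = range m := by
  rw [range_add_one, erase_insert notMem_range_self]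

theorem range_add_one_erase_zero (m : ℕ) : (range (m + 1)).erase 0 = (range m).image (· + 1) := by
  rw [range_add_one', erase_insert (by simp), map_eq_image]
  rfl

section Step

variable (lab L) (i : Fin n)

/-- A facet of a simplex of the face of dimension `i + 1` is a door if it carries the labels
`0, …, i`; the facet is the one opposite to the vertex `k`. -/
def IsDoor (t : (Fin n → ℤ) × Perm (Fin n)) (k : ℕ) : Prop :=
  ((range (i + 2)).erase k).image (labels lab t) = range (i + 1)

instance (t : (Fin n → ℤ) × Perm (Fin n)) (k : ℕ) : Decidable (IsDoor lab i t k) :=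
  inferInstanceAs (Decidable (_ = _))

noncomputable def doors : Finset (((Fin n → ℤ) × Perm (Fin n)) × ℕ) :=
  (faceSimplices L (i + 1) ×ˢ range (i + 2)).filter fun d => IsDoor lab i d.1 d.2

variable {lab L i}

theorem mem_doors {k : ℕ} : ((x, σ), k) ∈ doors L lab i ↔
    (x, σ) ∈ faceSimplices L (i + 1) ∧ k < i + 2 ∧ IsDoor lab i (x, σ) k := by
  simp [doors, and_assoc]

theorem card_doors_mod_two (hlab : IsSpernerLabeling L lab) :
    (#(doors L lab i) : ZMod 2) = #((faceSimplices L (i + 1)).filter (IsFull lab (i + 1))) := by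
  rw [doors, natCast_card_filter, sum_product, natCast_card_filter]
  refine sum_congr rfl fun t ht => ?_
  rw [← natCast_card_filter]
  have := card_filter_image_erase_eq_mod_two (mem_range.mpr (Nat.lt_succ_self (i + 1))) rfl
    fun k hk => mem_range.mpr (labels_lt hlab ht (Nat.lt_succ_iff.mp (mem_range.mp hk)))
  rwa [range_erase_add_one] at this

theorem isDoor_swapAt_iff {k : ℕ} : IsDoor lab i (x, σ * swapAt k) k ↔ IsDoor lab i (x, σ) k := by
  unfold IsDoor
  refine Eq.congr_left (image_congr fun m hm => ?_)
  simp only [labels, vertex_mul_swapAt (mem_erase.mp hm).1]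

theorem swapAt_mem_faceSimplices {D k : ℕ} (h : (x, σ) ∈ faceSimplices L D) (hk : k < D) :
    (x, σ * swapAt k) ∈ faceSimplices L D := by
  obtain ⟨hbox, hface⟩ := mem_faceSimplices.mp h
  refine mem_faceSimplices.mpr ⟨hbox, fun j hj => ⟨(hface j hj).1, ?_⟩⟩
  rw [Perm.mul_apply, swapAt_apply_of_lt (by omega), (hface j hj).2]

theorem unshift_mem_faceSimplices (h : (x, σ) ∈ faceSimplices L (i + 1)) (hx : x (σ i) ≠ 0) :
    (x - Pi.single (σ i) 1, σ * i.cycleRange⁻¹) ∈ faceSimplices L (i + 1) := by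
  obtain ⟨hbox, hface⟩ := mem_faceSimplices.mp h
  have hσi : (σ i : ℕ) < i + 1 := apply_lt_of_mem_faceSimplices h (by omega)
  refine mem_faceSimplices.mpr ⟨fun j => ?_, fun j hj => ?_⟩
  · have := hbox j
    by_cases hj : j = σ i
    · subst hj
      simp only [Pi.sub_apply, Pi.single_eq_same]
      omega
    · simpa [hj] using this
  · have hne : j ≠ σ i := by rintro rfl; omega
    refine ⟨by simp [hne, (hface j hj).1], ?_⟩
    have hcyc : i.cycleRange j = j := Fin.cycleRange_of_gt (Fin.lt_def.mpr (by omega))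
    rw [Perm.mul_apply, Perm.inv_eq_iff_eq.mpr hcyc.symm, (hface j hj).2]

theorem apply_eq_self_of_isDoor_top (hlab : IsSpernerLabeling L lab)
    (h : (x, σ) ∈ faceSimplices L (i + 1)) (hdoor : IsDoor lab i (x, σ) (i + 1))
    (hx : x (σ i) = 0) : σ i = i := by
  by_contra hne
  have hlt : (σ i : ℕ) < i := by
    have := apply_lt_of_mem_faceSimplices h (u := i) (by omega)
    have : (σ i : ℕ) ≠ i := fun h => hne (Fin.ext h)
    omega
  obtain ⟨m, hm, hlm⟩ := mem_image.mp (hdoor ▸ mem_range.mpr (by omega : (σ i : ℕ) + 1 < i + 1))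
  obtain ⟨hmi, hm⟩ := mem_erase.mp hm
  have hm : m ≤ i := by have := mem_range.mp hm; omega
  refine hlab.ne_succ_of_eq_zero _ (vertex_mem_cube h m) (σ i) ?_ (Fin.ext hlm)
  simp only [vertex, symm_apply_apply, if_neg (by omega : ¬(i : ℕ) < m)]
  omega

theorem isFull_of_isDoor_top (hlab : IsSpernerLabeling L lab)
    (h : (x, σ) ∈ faceSimplices L (i + 1)) (hdoor : IsDoor lab i (x, σ) (i + 1))
    (hx : x (σ i) = 0) : (x, σ) ∈ faceSimplices L i ∧ IsFull lab i (x, σ) := by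
  have hσi := apply_eq_self_of_isDoor_top hlab h hdoor hx
  obtain ⟨hbox, hface⟩ := mem_faceSimplices.mp h
  refine ⟨mem_faceSimplices.mpr ⟨hbox, fun j hj => ?_⟩, ?_⟩
  · rcases eq_or_ne j i with rfl | hji
    · exact ⟨hσi ▸ hx, hσi⟩
    · exact hface j (by have : (j : ℕ) ≠ i := fun h => hji (Fin.ext h); omega)
  · rwa [IsDoor, range_erase_add_one] at hdoor

theorem mem_doors_of_isFull (h : (x, σ) ∈ faceSimplices L i) (hfull : IsFull lab i (x, σ)) :
    ((x, σ), (i : ℕ) + 1) ∈ doors L lab i := by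
  refine mem_doors.mpr ⟨faceSimplices_mono (Nat.le_succ i) h, by omega, ?_⟩
  rwa [IsDoor, range_erase_add_one]

variable [NeZero n]

theorem isDoor_shift_iff :
    IsDoor lab i (x + Pi.single (σ 0) 1, σ * i.cycleRange) (i + 1) ↔ IsDoor lab i (x, σ) 0 := by
  unfold IsDoor
  rw [range_erase_add_one, range_add_one_erase_zero, image_image]
  refine Eq.congr_left (image_congr fun m hm => ?_)
  simp only [labels, Function.comp_apply, vertex_shift (Nat.lt_succ_iff.mp (mem_range.mp hm))]

theorem shift_mem_faceSimplices (h : (x, σ) ∈ faceSimplices L (i + 1)) (hx : x (σ 0) + 1 ≠ L) :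
    (x + Pi.single (σ 0) 1, σ * i.cycleRange) ∈ faceSimplices L (i + 1) := by
  obtain ⟨hbox, hface⟩ := mem_faceSimplices.mp h
  have hσ0 : (σ 0 : ℕ) < i + 1 := apply_lt_of_mem_faceSimplices h (by simp)
  refine mem_faceSimplices.mpr ⟨fun j => ?_, fun j hj => ?_⟩
  · have := hbox j
    by_cases hj : j = σ 0
    · subst hj
      simp only [Pi.add_apply, Pi.single_eq_same]
      omega
    · simpa [hj] using this
  · have hne : j ≠ σ 0 := by rintro rfl; omega
    refine ⟨by simp [hne, (hface j hj).1], ?_⟩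
    rw [Perm.mul_apply, Fin.cycleRange_of_gt (Fin.lt_def.mpr (by omega)), (hface j hj).2]

variable (i) in
/-- The simplex on the other side of the facet opposite to vertex `k`, and the index of its
vertex opposite to that facet. The first two cases leave the face of dimension `i + 1`
exactly when the facet lies on its boundary. -/
def nextDoor : ((Fin n → ℤ) × Perm (Fin n)) × ℕ → ((Fin n → ℤ) × Perm (Fin n)) × ℕ
  | ((x, σ), k) =>
    if k = 0 then ((x + Pi.single (σ 0) 1, σ * i.cycleRange), i + 1)
    else if k = i + 1 then ((x - Pi.single (σ i) 1, σ * i.cycleRange⁻¹), 0)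
    else ((x, σ * swapAt k), k)

theorem nextDoor_nextDoor (d : ((Fin n → ℤ) × Perm (Fin n)) × ℕ) :
    nextDoor i (nextDoor i d) = d := by
  obtain ⟨⟨x, σ⟩, k⟩ := d
  by_cases hk0 : k = 0
  · subst hk0
    simp [nextDoor]
  by_cases hki : k = i + 1
  · subst hki
    simp [nextDoor]
  · simp [nextDoor, hk0, hki, mul_assoc, swapAt_mul_self]

theorem nextDoor_ne {k : ℕ} (hk : k ≤ i + 1) : nextDoor i ((x, σ), k) ≠ ((x, σ), k) := by
  dsimp only [nextDoor]
  split_ifs with hk0 hki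
  · simp [hk0]
  · simp [hki]
  · have hσ : σ * swapAt k ≠ σ := by
      simpa using swapAt_ne_one (n := n) (by omega) (by have := i.isLt; omega)
    simp [hσ]

theorem not_isDoor_zero (hlab : IsSpernerLabeling L lab)
    (h : (x, σ) ∈ faceSimplices L (i + 1)) (hx : x (σ 0) + 1 = L) : ¬IsDoor lab i (x, σ) 0 := by
  intro hdoor
  obtain ⟨m, hm, hlm⟩ := mem_image.mp (hdoor ▸ mem_range.mpr (Nat.succ_pos i))
  have hm0 : m ≠ 0 := (mem_erase.mp hm).1
  refine hlab.ne_zero_of_eq_top _ (vertex_mem_cube h m) (σ 0) ?_ (Fin.ext hlm)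
  simp only [vertex, symm_apply_apply, Fin.val_zero, if_pos (Nat.pos_of_ne_zero hm0)]
  exact hx

theorem nextDoor_top_not_mem_doors (h : (x, σ) ∈ faceSimplices L i) :
    nextDoor i ((x, σ), (i : ℕ) + 1) ∉ doors L lab i := by
  obtain ⟨hxi, hσi⟩ := (mem_faceSimplices.mp h).2 i le_rfl
  simp only [nextDoor, Nat.succ_ne_zero, if_false, if_true, mem_doors, mem_faceSimplices]
  intro hmem
  have := (hmem.1.1 i).1
  simp [hσi, hxi] at this

theorem eq_top_of_nextDoor_not_mem_doors (hlab : IsSpernerLabeling L lab) {k : ℕ}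
    (hd : ((x, σ), k) ∈ doors L lab i) (hnext : nextDoor i ((x, σ), k) ∉ doors L lab i) :
    k = i + 1 ∧ x (σ i) = 0 := by
  obtain ⟨h, hk, hdoor⟩ := mem_doors.mp hd
  rcases eq_or_ne k 0 with rfl | hk0
  · have hx : x (σ 0) + 1 ≠ L := fun hx => not_isDoor_zero hlab h hx hdoor
    refine absurd (mem_doors.mpr ⟨shift_mem_faceSimplices h hx, by omega, ?_⟩) hnext
    exact isDoor_shift_iff.mpr hdoor
  rcases eq_or_ne k (i + 1) with rfl | hki
  · refine ⟨rfl, by_contra fun hx => hnext ?_⟩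
    simp only [nextDoor, if_neg hk0, if_true]
    refine mem_doors.mpr ⟨unshift_mem_faceSimplices h hx, by omega, isDoor_shift_iff.mp ?_⟩
    simpa using hdoor
  · simp only [nextDoor, if_neg hk0, if_neg hki] at hnext
    exact absurd (mem_doors.mpr ⟨swapAt_mem_faceSimplices h (by omega), hk,
      isDoor_swapAt_iff.mpr hdoor⟩) hnext

theorem card_filter_nextDoor_mem_doors :
    (#((doors L lab i).filter fun d => nextDoor i d ∈ doors L lab i) : ZMod 2) = 0 := by
  rw [card_eq_sum_ones, Nat.cast_sum, Nat.cast_one]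
  refine sum_involution (fun d _ => nextDoor i d) (fun _ _ => by decide) (fun d hd _ => ?_)
    (fun d hd => ?_) (fun d _ => nextDoor_nextDoor d)
  · obtain ⟨⟨x, σ⟩, k⟩ := d
    exact nextDoor_ne (by have := (mem_doors.mp (mem_filter.mp hd).1).2.1; omega)
  · rw [mem_filter] at hd ⊢
    exact ⟨hd.2, by rw [nextDoor_nextDoor]; exact hd.1⟩

theorem card_filter_nextDoor_not_mem_doors (hlab : IsSpernerLabeling L lab) :
    #((doors L lab i).filter fun d => nextDoor i d ∉ doors L lab i) =
      #((faceSimplices L i).filter (IsFull lab i)) := by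
  refine card_bij' (fun d _ => d.1) (fun t _ => (t, (i : ℕ) + 1)) ?_ ?_ ?_ fun _ _ => rfl
  · rintro ⟨⟨x, σ⟩, k⟩ hd
    obtain ⟨hd, hnext⟩ := mem_filter.mp hd
    obtain ⟨rfl, hx⟩ := eq_top_of_nextDoor_not_mem_doors hlab hd hnext
    obtain ⟨h, -, hdoor⟩ := mem_doors.mp hd
    exact mem_filter.mpr (isFull_of_isDoor_top hlab h hdoor hx)
  · rintro ⟨x, σ⟩ ht
    obtain ⟨h, hfull⟩ := mem_filter.mp ht
    exact mem_filter.mpr ⟨mem_doors_of_isFull h hfull, nextDoor_top_not_mem_doors h⟩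
  · rintro ⟨⟨x, σ⟩, k⟩ hd
    obtain ⟨hd, hnext⟩ := mem_filter.mp hd
    rw [(eq_top_of_nextDoor_not_mem_doors hlab hd hnext).1]

theorem card_filter_isFull_succ_mod_two (hlab : IsSpernerLabeling L lab) :
    (#((faceSimplices L (i + 1)).filter (IsFull lab (i + 1))) : ZMod 2) =
      #((faceSimplices L i).filter (IsFull lab i)) := by
  rw [← card_doors_mod_two hlab,
    ← card_filter_add_card_filter_not (s := doors L lab i)
      (p := fun d => nextDoor i d ∈ doors L lab i),
    Nat.cast_add, card_filter_nextDoor_mem_doors, zero_add,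
    card_filter_nextDoor_not_mem_doors hlab]

end Step

theorem card_filter_isFull_mod_two (hL : 1 ≤ L) (hlab : IsSpernerLabeling L lab) {D : ℕ}
    (hD : D ≤ n) : (#((faceSimplices L D).filter (IsFull lab D)) : ZMod 2) = 1 := by
  induction D with
  | zero =>
    rw [filter_true_of_mem fun _ => isFull_zero hlab, faceSimplices_zero hL, card_singleton,
      Nat.cast_one]
  | succ D ih =>
    have : NeZero n := ⟨by omega⟩
    rw [← ih (by omega)]
    exact card_filter_isFull_succ_mod_two (i := ⟨D, by omega⟩) hlab

/-- Sperner's lemma for the Freudenthal triangulation of the cube `[0, L]ⁿ`. -/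
theorem exists_injOn_vertex (hL : 1 ≤ L) (hlab : IsSpernerLabeling L lab) :
    ∃ x σ, Set.InjOn (fun k => lab (vertex x σ k)) (range (n + 1)) := by
  obtain ⟨⟨x, σ⟩, ht⟩ : ((faceSimplices L n).filter (IsFull lab n)).Nonempty := by
    rw [nonempty_iff_ne_empty]
    intro h
    simpa [h] using card_filter_isFull_mod_two hL hlab le_rfl
  refine ⟨x, σ, Set.InjOn.of_comp (g := Fin.val) (injOn_of_card_image_eq ?_)⟩
  exact congrArg card (mem_filter.mp ht).2

end Sperner

section FinChain

variable {β : Type*} {r : β → β → Prop}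

theorem reflTransGen_of_fin_chain {N : ℕ} (c : Fin (N + 1) → β)
    (h : ∀ t : Fin N, r (c t.castSucc) (c t.succ)) : ReflTransGen r (c 0) (c (Fin.last N)) := by
  induction N with
  | zero => exact .refl
  | succ N ih =>
    refine (ih (fun t => c t.castSucc) fun t => ?_).tail (h (Fin.last N))
    simpa only [Fin.succ_castSucc] using h t.castSucc

theorem exists_fin_chain_of_reflTransGen {a b : β} (h : ReflTransGen r a b) :
    ∃ (N : ℕ) (c : Fin (N + 1) → β), c 0 = a ∧ c (Fin.last N) = b ∧
      (∀ t, ReflTransGen r a (c t)) ∧ ∀ t : Fin N, r (c t.castSucc) (c t.succ) := by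
  induction h with
  | refl => exact ⟨0, fun _ => a, rfl, rfl, fun _ => .refl, Fin.elim0⟩
  | @tail b' b'' _ hstep ih =>
    obtain ⟨N, c, h0, hN, hreach, hchain⟩ := ih
    refine ⟨N + 1, Fin.snoc c b'', by simpa using h0, by simp, fun t => ?_, fun t => ?_⟩
    · refine Fin.lastCases ?_ (fun s => ?_) t
      · simpa using (hN ▸ hreach (Fin.last N)).tail hstep
      · simpa using hreach s
    · refine Fin.lastCases ?_ (fun s => ?_) t
      · simpa [hN] using hstep
      · rw [Fin.succ_castSucc, Fin.snoc_castSucc, Fin.snoc_castSucc]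
        exact hchain s

end FinChain

section MonochromaticComponents

variable {α : Type*} {n : ℕ}

variable (f : (Fin n → ℤ) → α) in
def MonoAdj (p q : Fin n → ℤ) : Prop := f p = f q ∧ ∀ j, |p j - q j| ≤ 1

variable {f : (Fin n → ℤ) → α} {p q q₀ q₁ : Fin n → ℤ}

theorem apply_eq_of_reflTransGen_monoAdj (h : ReflTransGen (MonoAdj f) p q) : f q = f p := by
  induction h with
  | refl => rfl
  | tail _ hstep ih => exact hstep.1.symm.trans ih

instance : Std.Symm (MonoAdj f) where
  symm _ _ h := ⟨h.1.symm, fun j => abs_sub_comm (α := ℤ) .. ▸ h.2 j⟩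

theorem reflTransGen_monoAdj_iff_of_monoAdj (h : MonoAdj f p q) {r : Fin n → ℤ} :
    ReflTransGen (MonoAdj f) p r ↔ ReflTransGen (MonoAdj f) q r :=
  ⟨fun h' => (ReflTransGen.single (symm h)).trans h', fun h' => h'.head h⟩

theorem oneConnected_setOf_reflTransGen_monoAdj :
    OneConnected {q | ReflTransGen (MonoAdj f) p q} := by
  intro u hu v hv
  obtain ⟨N, c, h0, hN, hreach, hchain⟩ := exists_fin_chain_of_reflTransGen ((symm hu).trans hv)
  exact ⟨N, c, fun t => hu.trans (hreach t), h0, hN, fun t => (hchain t).2⟩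

theorem isOneComponent_setOf_reflTransGen_monoAdj :
    IsOneComponent (f ⁻¹' {f p}) {q | ReflTransGen (MonoAdj f) p q} := by
  refine ⟨fun q hq => apply_eq_of_reflTransGen_monoAdj hq, oneConnected_setOf_reflTransGen_monoAdj,
    fun C hC hCf hconn => (Set.Subset.antisymm (fun q hq => ?_) hC)⟩
  obtain ⟨N, c, hc, h0, hN, hchain⟩ := hconn p (hC ReflTransGen.refl) q hq
  have := reflTransGen_of_fin_chain (r := MonoAdj f) c fun t =>
    ⟨(hCf (hc _)).trans (hCf (hc _)).symm, hchain t⟩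
  rwa [h0, hN] at this

theorem exists_reflTransGen_monoAdj_apply_eq (h : ReflTransGen (MonoAdj f) q₀ q₁) (i : Fin n)
    {v : ℤ} (h₀ : q₀ i ≤ v) (h₁ : v ≤ q₁ i) : ∃ q, ReflTransGen (MonoAdj f) q₀ q ∧ q i = v := by
  induction h with
  | refl => exact ⟨q₀, .refl, le_antisymm h₀ h₁⟩
  | @tail b c hb hstep ih =>
    by_cases hv : v ≤ b i
    · exact ih hv
    · exact ⟨c, hb.tail hstep, by have := abs_le.mp (hstep.2 i); omega⟩

theorem toNat_le_ncard_setOf_reflTransGen_monoAdj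
    (hfin : {q | ReflTransGen (MonoAdj f) p q}.Finite) (h₀ : ReflTransGen (MonoAdj f) p q₀)
    (h₁ : ReflTransGen (MonoAdj f) p q₁) (i : Fin n) :
    (q₁ i + 1 - q₀ i).toNat ≤ {q | ReflTransGen (MonoAdj f) p q}.ncard := by
  have hIcc : Set.Icc (q₀ i) (q₁ i) ⊆ (· i) '' {q | ReflTransGen (MonoAdj f) p q} := by
    intro v hv
    obtain ⟨q, hq, hqv⟩ := exists_reflTransGen_monoAdj_apply_eq ((symm h₀).trans h₁) i hv.1 hv.2
    exact ⟨q, h₀.trans hq, hqv⟩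
  calc (q₁ i + 1 - q₀ i).toNat = (Set.Icc (q₀ i) (q₁ i)).ncard := by
        rw [← coe_Icc, Set.ncard_coe_finset, Int.card_Icc]
    _ ≤ ((· i) '' {q | ReflTransGen (MonoAdj f) p q}).ncard :=
        Set.ncard_le_ncard hIcc (hfin.image _)
    _ ≤ _ := Set.ncard_image_le hfin

variable (f) in
def avoidedZeroFaces (p : Fin n → ℤ) : Set (Fin n) :=
  {i | ∀ q, ReflTransGen (MonoAdj f) p q → q i ≠ 0}

variable (f) in
open Classical in
noncomputable def hexLabel (p : Fin n → ℤ) : Fin (n + 1) :=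
  if h : (avoidedZeroFaces f p).Nonempty then h.some.succ else 0

theorem hexLabel_eq_of_monoAdj {p q : Fin n → ℤ} (h : MonoAdj f p q) :
    hexLabel f p = hexLabel f q := by
  have : avoidedZeroFaces f p = avoidedZeroFaces f q := by
    simp only [avoidedZeroFaces, reflTransGen_monoAdj_iff_of_monoAdj h]
  unfold hexLabel
  rw [this]

theorem isSpernerLabeling_hexLabel {L : ℕ}
    (h : ∀ p i, (∃ q, ReflTransGen (MonoAdj f) p q ∧ q i = 0) →
      ∀ q, ReflTransGen (MonoAdj f) p q → q i ≠ L) :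
    Sperner.IsSpernerLabeling L (hexLabel f) where
  ne_succ_of_eq_zero p _ i hp := by
    unfold hexLabel
    split_ifs with hne
    · intro heq
      exact (Fin.succ_injective n heq ▸ hne.some_mem) p .refl hp
    · exact (Fin.succ_ne_zero i).symm
  ne_zero_of_eq_top p _ i hp := by
    unfold hexLabel
    split_ifs with hne
    · exact Fin.succ_ne_zero _
    · intro
      have : ¬∀ q, ReflTransGen (MonoAdj f) p q → q i ≠ 0 := fun hi => hne ⟨i, hi⟩
      simp only [not_forall, not_not] at this
      obtain ⟨q, hq, hqi⟩ := this
      exact h p i ⟨q, hq, hqi⟩ p .refl hp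

/-- The `n`-dimensional Hex theorem: for any colouring of `ℤⁿ` with at most `n` colours, some
monochromatic component meets two opposite faces of the cube `[0, L]ⁿ`. -/
theorem exists_monoAdj_path_between_opposite_faces [Fintype α] (hα : Fintype.card α ≤ n) {L : ℕ}
    (hL : 1 ≤ L) : ∃ p i, (∃ q, ReflTransGen (MonoAdj f) p q ∧ q i = 0) ∧
      ∃ q, ReflTransGen (MonoAdj f) p q ∧ q i = L := by
  by_contra! h
  obtain ⟨x, σ, hinj⟩ := Sperner.exists_injOn_vertex hL (isSpernerLabeling_hexLabel h)
  obtain ⟨k, hk, k', hk', hne, hf⟩ := exists_ne_map_eq_of_card_lt_of_maps_to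
    (s := range (n + 1)) (t := univ) (by simpa using Nat.lt_succ_of_le hα)
    (f := fun k => f (Sperner.vertex x σ k)) fun _ _ => mem_univ _
  exact hne (hinj hk hk' (hexLabel_eq_of_monoAdj
    ⟨hf, Sperner.abs_vertex_sub_vertex_le_one x σ k k'⟩))

end MonochromaticComponents

theorem no_bounded_n_coloring_of_grid_general (n : ℕ) :
    ¬ ∃ (f : (Fin n → ℤ) → Fin n) (K : ℕ),
      ∀ i : Fin n, ∀ C, IsOneComponent (f ⁻¹' {i}) C → C.Finite ∧ C.ncard ≤ K := by
  rintro ⟨f, K, hK⟩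
  obtain ⟨p, i, ⟨q₀, h₀, hq₀⟩, q₁, h₁, hq₁⟩ :=
    exists_monoAdj_path_between_opposite_faces (f := f) (Fintype.card_fin n).le (L := K + 1) le_add_self
  obtain ⟨hfin, hcard⟩ := hK (f p) _ isOneComponent_setOf_reflTransGen_monoAdj
  have := toNat_le_ncard_setOf_reflTransGen_monoAdj hfin h₀ h₁ i
  omega

/-- Lower bound for the clustered chromatic number of `Gₙ^∞`: there is no `n`-coloring of
`ℤⁿ` all of whose monochromatic 1-connected components have uniformly bounded size. -/
theorem no_bounded_n_coloring_of_grid (n m : ℕ) (hn : 1 ≤ n) (hm : 1 ≤ m) :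
    ¬ ∃ (f : (Fin n → ℤ) → Fin n) (K : ℕ),
      ∀ i : Fin n, ∀ C, IsOneComponent (f ⁻¹' {i}) C → C.Finite ∧ C.ncard ≤ K :=
  no_bounded_n_coloring_of_grid_general n
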